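/- Let $d$ be a positive integer and $S_1^{(d)}$ the $T$-space of $k_0\langle X\rangle$ generated by $S^{(d)}(x_1,\ldots,x_d)$. Then for every $u \in S_1^{(d)}$ and every $v \in k_0\langle X\rangle$, the commutator $[u,v] = uv - vu$ belongs to $S_1^{(d)}$. -/

import Mathlib

open scoped BigOperators

/-- The free non-unital associative algebra over `k` on countably many variables,
realized as the semigroup algebra of the free semigroup on `ℕ`. -/
abbrev FA (k : Type*) [Field k] := MonoidAlgebra k (FreeSemigroup ℕ)

/-- The generator (variable) `x_i`. -/
noncomputable def Xg (k : Type*) [Field k] (i : ℕ) : FA k :=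
  MonoidAlgebra.single (FreeSemigroup.of i) 1

/-- Product of a (nonempty) list in a non-unital semiring; `0` on the empty list. -/
def lprod {A : Type*} [NonUnitalSemiring A] : List A → A
  | [] => 0
  | [a] => a
  | a :: b :: l => a * lprod (b :: l)

/-- `n`-th power in a non-unital semiring (zero for `n = 0`). -/
def npow' {A : Type*} [NonUnitalSemiring A] (a : A) (n : ℕ) : A :=
  lprod (List.replicate n a)

/-- The full multilinear symmetrization `S^{(d)}(y_1,…,y_d) = ∑_{σ ∈ Σ_d} y_{σ(1)} ⋯ y_{σ(d)}`. -/
def Ssym {A : Type*} [NonUnitalSemiring A] (d : ℕ) (y : Fin d → A) : A :=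
  ∑ σ : Equiv.Perm (Fin d), lprod (List.ofFn (fun i => y (σ i)))

/-- A T-space: a subspace closed under all substitution endomorphisms
(non-unital algebra endomorphisms). -/
def IsTSpace (k : Type*) [Field k] (V : Submodule k (FA k)) : Prop :=
  ∀ (φ : FA k →ₙₐ[k] FA k), ∀ v ∈ V, φ v ∈ V

/-- The T-space generated by a set `S`: the span of all substitution instances
of elements of `S`. -/
noncomputable def TSpan (k : Type*) [Field k] (S : Set (FA k)) : Submodule k (FA k) :=
  Submodule.span k {a | ∃ (φ : FA k →ₙₐ[k] FA k) (s : FA k), s ∈ S ∧ a = φ s}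

/-- The set of products `u * v` with `u ∈ U`, `v ∈ V`. -/
def mulSet {k : Type*} [Field k] (U V : Submodule k (FA k)) : Set (FA k) :=
  {a | ∃ u ∈ U, ∃ v ∈ V, a = u * v}

/-- The T-spaces `S_n^{(d)}`: `S_1^{(d)}` is generated by `S^{(d)}(x_1,…,x_d)` and
`S_{n+1}^{(d)} = (S_n^{(d)} S_1^{(d)})^S`. -/
noncomputable def Sn (k : Type*) [Field k] (d : ℕ) : ℕ → Submodule k (FA k)
  | 0 => ⊥
  | 1 => TSpan k {Ssym d (fun i => Xg k i)}
  | (n+2) => TSpan k (mulSet (Sn k d (n+1)) (Sn k d 1))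

/-- The T-spaces `H_n`: `H_1` is generated by `x_1^p` and `H_{n+1} = (H_n H_1)^S`. -/
noncomputable def Hn (k : Type*) [Field k] (p : ℕ) : ℕ → Submodule k (FA k)
  | 0 => ⊥
  | 1 => TSpan k {npow' (Xg k 0) p}
  | (n+2) => TSpan k (mulSet (Hn k p (n+1)) (Hn k p 1))

/-- The word `x_1^p x_2^p ⋯ x_n^p`. -/
noncomputable def hword (k : Type*) [Field k] (p n : ℕ) : FA k :=
  lprod ((List.range n).map (fun t => npow' (Xg k t) p))

/-!
If `u` is a substitution instance `S^{(d)}(y_1, …, y_d)` of the generator, then `u ↦ [u, v]`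
is a derivation, and by the Leibniz rule applied to each monomial,
`[S^{(d)}(y_1, …, y_d), v] = ∑ₜ S^{(d)}(y_1, …, [y_t, v], …, y_d)`, again a sum of
substitution instances. Linearity extends this to all of `S_1^{(d)}`.
-/

section Lprod

variable {A : Type*} [NonUnitalSemiring A]

lemma lprod_cons_of_ne_nil (a : A) {l : List A} (hl : l ≠ []) :
    lprod (a :: l) = a * lprod l := by
  cases l with
  | nil => exact absurd rfl hl
  | cons b t => rfl

lemma map_lprod {B F : Type*} [NonUnitalSemiring B] [FunLike F A B]
    [NonUnitalRingHomClass F A B] (φ : F) : ∀ l : List A, φ (lprod l) = lprod (l.map φ)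
  | [] => map_zero φ
  | [_] => rfl
  | a :: b :: l => by
    change φ (a * lprod (b :: l)) = φ a * lprod ((b :: l).map φ)
    rw [map_mul, map_lprod φ (b :: l)]

lemma map_Ssym {B F : Type*} [NonUnitalSemiring B] [FunLike F A B]
    [NonUnitalRingHomClass F A B] (φ : F) (d : ℕ) (y : Fin d → A) :
    φ (Ssym d y) = Ssym d (fun i => φ (y i)) := by
  simp only [Ssym, map_sum, map_lprod, List.map_ofFn, Function.comp_def]

lemma lprod_ofFn_succ_succ {n : ℕ} (f : Fin (n + 2) → A) :
    lprod (List.ofFn f) = f 0 * lprod (List.ofFn fun i => f i.succ) := by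
  rw [List.ofFn_succ (f := f)]
  exact lprod_cons_of_ne_nil _ (by simp)

variable {F : Type*} [FunLike F A A] [AddMonoidHomClass F A A]

lemma leibniz_lprod_ofFn (D : F) (hD : ∀ a b : A, D (a * b) = D a * b + a * D b) :
    ∀ {n : ℕ} (f : Fin n → A),
      D (lprod (List.ofFn f)) = ∑ i, lprod (List.ofFn (Function.update f i (D (f i))))
  | 0, _ => by simp [lprod]
  | 1, f => by simp [lprod]
  | n + 2, f => by
    rw [lprod_ofFn_succ_succ, hD, Fin.sum_univ_succ, leibniz_lprod_ofFn D hD,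
      Finset.mul_sum, lprod_ofFn_succ_succ]
    congr 1
    refine Finset.sum_congr rfl fun i _ => ?_
    rw [lprod_ofFn_succ_succ, Function.update_of_ne (Fin.succ_ne_zero i).symm,
      Function.update_comp_eq_of_injective' f (Fin.succ_injective _)]

lemma leibniz_Ssym (D : F) (hD : ∀ a b : A, D (a * b) = D a * b + a * D b)
    (d : ℕ) (y : Fin d → A) :
    D (Ssym d y) = ∑ t, Ssym d (Function.update y t (D (y t))) := by
  simp only [Ssym, map_sum, leibniz_lprod_ofFn D hD]
  refine (Finset.sum_congr rfl fun σ _ => ?_).trans Finset.sum_comm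
  refine Fintype.sum_equiv σ _ _ fun i => ?_
  rw [Function.update_comp_eq_of_injective' y σ.injective]

end Lprod

section TSpace

variable {k : Type*} [Field k]

lemma Ssym_mem_Sn_one (d : ℕ) (y : Fin d → FA k) : Ssym d y ∈ Sn k d 1 := by
  let φ : FA k →ₙₐ[k] FA k := MonoidAlgebra.liftMagma k
    (FreeSemigroup.lift fun n => if h : n < d then y ⟨n, h⟩ else 0)
  have hφ : Ssym d y = φ (Ssym d fun i => Xg k i) := by
    rw [map_Ssym]
    congr 1
    funext i
    simp [φ, Xg, MonoidAlgebra.liftMagma_apply_apply]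
  rw [hφ, Sn, TSpan]
  exact Submodule.subset_span ⟨φ, _, rfl, rfl⟩

lemma Sn_one_le_comap_of_leibniz (d : ℕ) (D : FA k →ₗ[k] FA k)
    (hD : ∀ a b : FA k, D (a * b) = D a * b + a * D b) :
    Sn k d 1 ≤ (Sn k d 1).comap D := by
  conv_lhs => rw [Sn, TSpan]
  refine Submodule.span_le.2 ?_
  rintro _ ⟨φ, _, rfl, rfl⟩
  rw [SetLike.mem_coe, Submodule.mem_comap, map_Ssym, leibniz_Ssym D hD]
  exact Submodule.sum_mem _ fun t _ => Ssym_mem_Sn_one d _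

end TSpace

theorem S1_closed_under_commutator_general (k : Type*) [Field k] (d : ℕ) :
    ∀ u ∈ Sn k d 1, ∀ v : FA k, u * v - v * u ∈ Sn k d 1 := by
  intro u hu v
  let D : FA k →ₗ[k] FA k := LinearMap.mulRight k v - LinearMap.mulLeft k v
  have hD : ∀ a b : FA k, D (a * b) = D a * b + a * D b := by
    intro a b
    simp only [D, LinearMap.sub_apply, LinearMap.mulRight_apply, LinearMap.mulLeft_apply]
    noncomm_ring
  exact Sn_one_le_comap_of_leibniz d D hD hu

/-- The T-space `S_1^{(d)}` is closed under commutators with arbitrary elements. -/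
theorem S1_closed_under_commutator (k : Type*) [Field k] (d : ℕ) (hd : 1 ≤ d) :
    ∀ u ∈ Sn k d 1, ∀ v : FA k, u * v - v * u ∈ Sn k d 1 :=
  S1_closed_under_commutator_general k d
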